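/- For a positive integer n, f(f(n)) = 0 if and only if there exist positive integers u, v with n = u·v and |√u - √v| ≤ 1, where f(x) = ⌈2√x⌉² - 4x. -/

import Mathlib

/-!
`f x = 0` exactly when `x` is a perfect square, and `f n = c ^ 2 - 4 n` with `c = ⌈2√n⌉` is a
discriminant: it is a square iff `c = u + v` and `n = u v` for integers `u, v`. For a factorisation
`n = u v` one has `(√u - √v) ^ 2 = u + v - 2√n ≥ 0`, so `|√u - √v| ≤ 1` says
`2√n ≤ u + v ≤ 2√n + 1`, i.e. `u + v = ⌈2√n⌉`, or else `2√n` is an integer and `f n = 0`.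
-/

noncomputable def f (x : ℤ) : ℤ := ⌈2 * Real.sqrt x⌉ ^ 2 - 4 * x

open Real

theorem f_eq_zero_iff (x : ℤ) : f x = 0 ↔ IsSquare x := by
  constructor
  · intro hx
    have hc : ⌈2 * √x⌉ ^ 2 = 4 * x := by rw [f] at hx; linarith
    obtain ⟨m, hm⟩ : 2 ∣ ⌈2 * √x⌉ := Int.prime_two.dvd_of_dvd_pow ⟨2 * x, by rw [hc]; ring⟩
    rw [hm] at hc
    exact ⟨m, by linarith⟩
  · rintro ⟨m, rfl⟩
    have hceil : ⌈2 * √((m * m : ℤ) : ℝ)⌉ = 2 * |m| := by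
      rw [Int.cast_mul, sqrt_mul_self_eq_abs, ← Int.cast_abs, ← Int.cast_ofNat, ← Int.cast_mul,
        Int.ceil_intCast]
    rw [f, hceil, mul_pow, sq_abs]
    ring

theorem isSquare_sq_sub_four_mul_iff (c n : ℤ) :
    IsSquare (c ^ 2 - 4 * n) ↔ ∃ u v, c = u + v ∧ n = u * v := by
  constructor
  · rintro ⟨k, hk⟩
    -- `c - k` and `c + k` have the same parity and product `4 * n`, so both are even.
    obtain ⟨u, hu⟩ : 2 ∣ c - k := by
      have : 2 ∣ (c - k) * (c + k) := ⟨2 * n, by linear_combination hk⟩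
      rcases Int.prime_two.dvd_or_dvd this with h | h
      · exact h
      · omega
    have hc : c = 2 * u + k := by omega
    subst hc
    exact ⟨u, u + k, by ring, by linarith⟩
  · rintro ⟨u, v, rfl, rfl⟩
    exact ⟨u - v, by ring⟩

theorem sqrt_sub_sqrt_sq {u v : ℝ} (hu : 0 ≤ u) (hv : 0 ≤ v) :
    (√u - √v) ^ 2 = u + v - 2 * √(u * v) := by
  rw [sub_sq, sq_sqrt hu, sq_sqrt hv, sqrt_mul hu]
  ring

theorem two_sqrt_mul_le_add {u v : ℝ} (hu : 0 ≤ u) (hv : 0 ≤ v) : 2 * √(u * v) ≤ u + v := by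
  linarith [sqrt_sub_sqrt_sq hu hv, sq_nonneg (√u - √v)]

theorem abs_sqrt_sub_sqrt_le_one_iff {u v : ℝ} (hu : 0 ≤ u) (hv : 0 ≤ v) :
    |√u - √v| ≤ 1 ↔ u + v ≤ 2 * √(u * v) + 1 := by
  rw [← sq_le_one_iff_abs_le_one, sqrt_sub_sqrt_sq hu hv, sub_le_iff_le_add']

theorem Int.ceil_eq_or_eq_of_le_of_le_add_one {s : ℝ} {m : ℤ} (h₁ : s ≤ m) (h₂ : m ≤ s + 1) :
    ⌈s⌉ = m ∨ (⌈s⌉ : ℝ) = s := by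
  rcases h₂.lt_or_eq with h₂ | h₂
  · exact Or.inl (Int.ceil_eq_iff.mpr ⟨by linarith, h₁⟩)
  · right
    have hs : s = ((m - 1 : ℤ) : ℝ) := by push_cast; linarith
    rw [hs, Int.ceil_intCast]

theorem pos_and_pos_of_add_nonneg_of_mul_pos {α : Type*} [Ring α] [LinearOrder α]
    [IsStrictOrderedRing α] {u v : α} (hs : 0 ≤ u + v) (hp : 0 < u * v) : 0 < u ∧ 0 < v := by
  rcases pos_and_pos_or_neg_and_neg_of_mul_pos hp with h | h
  · exact h
  · exact absurd hs (add_neg h.1 h.2).not_ge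

theorem exists_factors_of_isSquare_ceil_two_sqrt_sq_sub {n : ℕ} (hn : 0 < n)
    (h : IsSquare (⌈2 * √(n : ℝ)⌉ ^ 2 - 4 * (n : ℤ))) :
    ∃ u v : ℕ, 0 < u ∧ 0 < v ∧ n = u * v ∧ (u + v : ℝ) ≤ 2 * √(u * v : ℝ) + 1 := by
  obtain ⟨u, v, hc, huv⟩ := (isSquare_sq_sub_four_mul_iff _ _).mp h
  obtain ⟨hu, hv⟩ := pos_and_pos_of_add_nonneg_of_mul_pos
    (hc ▸ Int.ceil_nonneg (by positivity)) (huv ▸ Int.natCast_pos.mpr hn)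
  lift u to ℕ using hu.le
  lift v to ℕ using hv.le
  have hn' : (n : ℝ) = u * v := by exact_mod_cast huv
  have hc' : (u + v : ℝ) = ⌈2 * √n⌉ := by exact_mod_cast hc.symm
  refine ⟨u, v, by omega, by omega, by exact_mod_cast huv, ?_⟩
  rw [← hn', hc']
  exact (Int.ceil_lt_add_one _).le

theorem isSquare_ceil_two_sqrt_sq_sub {u v : ℕ} (h : (u + v : ℝ) ≤ 2 * √(u * v : ℝ) + 1) :
    IsSquare (⌈2 * √(u * v : ℝ)⌉ ^ 2 - 4 * (u * v : ℤ)) := by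
  have hle : 2 * √(u * v : ℝ) ≤ ((u + v : ℤ) : ℝ) := by
    push_cast
    exact two_sqrt_mul_le_add (by positivity) (by positivity)
  rcases Int.ceil_eq_or_eq_of_le_of_le_add_one hle (by push_cast; exact h) with hc | hc
  · exact (isSquare_sq_sub_four_mul_iff _ _).mpr ⟨u, v, hc, rfl⟩
  · have hsq : (⌈2 * √(u * v : ℝ)⌉ : ℝ) ^ 2 = 4 * (u * v) := by
      rw [hc, mul_pow, sq_sqrt (by positivity)]
      norm_num
    have hsq' : ⌈2 * √(u * v : ℝ)⌉ ^ 2 = 4 * (u * v : ℤ) := by exact_mod_cast hsq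
    exact ⟨0, by rw [hsq']; ring⟩

theorem stmt_3 (n : ℕ) (hn : 0 < n) :
    f (f (n : ℤ)) = 0 ↔
      ∃ u v : ℕ, 0 < u ∧ 0 < v ∧ n = u * v ∧ |Real.sqrt u - Real.sqrt v| ≤ 1 := by
  rw [f_eq_zero_iff, f, Int.cast_natCast]
  constructor
  · intro h
    obtain ⟨u, v, hu, hv, rfl, hsum⟩ := exists_factors_of_isSquare_ceil_two_sqrt_sq_sub hn h
    exact ⟨u, v, hu, hv, rfl,
      (abs_sqrt_sub_sqrt_le_one_iff (by positivity) (by positivity)).mpr hsum⟩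
  · rintro ⟨u, v, -, -, rfl, h⟩
    push_cast
    exact isSquare_ceil_two_sqrt_sq_sub
      ((abs_sqrt_sub_sqrt_le_one_iff (by positivity) (by positivity)).mp h)
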